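/- Suppose D₁ and D₂ are functions, each holomorphic on ℂ minus (the real axis and a finite set of complex poles), each tending to 0 as |z| → ∞, and suppose D₁(iω_n) = D₂(iω_n) for every Matsubara frequency ω_n = 2πn/β, n ∈ ℤ \ {0}. Then D₁ = D₂ on the complement of the real axis and their pole sets coincide. -/

import Mathlib

/-!
Let `E = D₁ - D₂`. Far enough up, on a half-plane `{a < Im w}` free of poles, `E` is bounded and
vanishes at the Matsubara points `I * b * n`. A Cayley transform centred at a point `I * t` moves
these zeros to points `ζₙ` of the unit disc with `1 - ‖ζₙ‖ ≍ 1 / n`, so they violate the Blaschke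
condition `∑ (1 - ‖ζₙ‖) < ∞`, which Jensen's formula forces on the zeros of a bounded holomorphic
function not vanishing at the centre. Hence `E (I * t) = 0` for all large `t`, and the identity
theorem on the connected set `{0 < Im z}` minus the poles (and on its mirror image) gives `E = 0`
off the real axis. Finally, `‖D₁‖ → ∞` at a pole of `D₁` while `D₁ = D₂` nearby, so `D₂` cannot be
holomorphic there.
-/

open Complex Filter Set Topology
open Metric MeromorphicOn

theorem AnalyticOnNhd.one_le_divisor_of_apply_eq_zero {f : ℂ → ℂ} {U : Set ℂ} {c u : ℂ}
    (hf : AnalyticOnNhd ℂ f U) (hU : IsPreconnected U) (hc : c ∈ U) (hfc : f c ≠ 0)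
    (hu : u ∈ U) (hfu : f u = 0) : 1 ≤ divisor f U u := by
  have hne_top : analyticOrderAt f u ≠ ⊤ :=
    analyticOrderAt_ne_top_of_isPreconnected hf hU hc hu
      (by simp [(hf c hc).analyticOrderAt_eq_zero.2 hfc])
  have hne_zero : analyticOrderAt f u ≠ 0 := by
    simp [(hf u hu).analyticOrderAt_eq_zero, hfu]
  rw [hf.divisor_apply hu]
  obtain ⟨n, hn⟩ := ENat.ne_top_iff_exists.1 hne_top
  rw [← hn] at hne_zero ⊢
  simp only [ENat.map_natCast, WithTop.untop₀_coe, Nat.one_le_cast]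
  exact Nat.one_le_iff_ne_zero.2 (by exact_mod_cast hne_zero)

theorem log_mul_norm_sub_inv_nonneg {c u : ℂ} {ρ : ℝ} (hu : u ∈ closedBall c ρ) :
    0 ≤ Real.log (ρ * ‖c - u‖⁻¹) := by
  rcases eq_or_ne u c with rfl | hne
  · simp
  · apply Real.log_nonneg
    rw [← div_eq_mul_inv, one_le_div (norm_pos_iff.2 (sub_ne_zero.2 hne.symm)), ← dist_eq_norm']
    exact hu

theorem AnalyticOnNhd.sum_log_mul_norm_sub_inv_le {f : ℂ → ℂ} {c : ℂ} {ρ M : ℝ} (hρ : 0 < ρ)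
    (hM : 1 ≤ M) (hf : AnalyticOnNhd ℂ f (closedBall c ρ)) (hfc : f c ≠ 0)
    (hbound : ∀ z ∈ sphere c ρ, ‖f z‖ ≤ M) {t : Finset ℂ}
    (ht : ∀ u ∈ t, u ∈ closedBall c ρ ∧ f u = 0) :
    ∑ u ∈ t, Real.log (ρ * ‖c - u‖⁻¹) ≤ Real.log (M / ‖f c‖) := by
  rw [← abs_of_pos hρ] at hf hbound
  set D := divisor f (closedBall c |ρ|)
  set g : ℂ → ℝ := fun u ↦ D u * Real.log (ρ * ‖c - u‖⁻¹)
  have hg_nonneg : ∀ u, 0 ≤ g u := by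
    intro u
    by_cases hu : u ∈ closedBall c |ρ|
    · exact mul_nonneg (mod_cast hf.divisor_nonneg u)
        (log_mul_norm_sub_inv_nonneg (abs_of_pos hρ ▸ hu))
    · simp [g, D, hu]
  have hg_fin : (Function.support g).Finite :=
    (D.finiteSupport (isCompact_closedBall ..)).subset
      (Function.support_mul_subset_left (fun u ↦ (D u : ℝ)) _ |>.trans (by simp))
  have hsum_le : ∑ u ∈ t, Real.log (ρ * ‖c - u‖⁻¹) ≤ ∑ᶠ u, g u := by
    rw [finsum_eq_sum_of_support_subset g (s := t ∪ hg_fin.toFinset) (by simp)]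
    calc ∑ u ∈ t, Real.log (ρ * ‖c - u‖⁻¹) ≤ ∑ u ∈ t, g u := by
          refine Finset.sum_le_sum fun u hu ↦ le_mul_of_one_le_left
            (log_mul_norm_sub_inv_nonneg (ht u hu).1) ?_
          have hu' : u ∈ closedBall c |ρ| := by rw [abs_of_pos hρ]; exact (ht u hu).1
          exact_mod_cast hf.one_le_divisor_of_apply_eq_zero isPreconnected_closedBall
            (mem_closedBall_self (abs_nonneg ρ)) hfc hu' (ht u hu).2
      _ ≤ ∑ u ∈ t ∪ hg_fin.toFinset, g u :=
          Finset.sum_le_sum_of_subset_of_nonneg Finset.subset_union_left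
            (fun u _ _ ↦ hg_nonneg u)
  have havg : Real.circleAverage (Real.log ‖f ·‖) c ρ ≤ Real.log M := by
    apply Real.circleAverage_mono_on_of_le_circle
    · exact (hf.mono sphere_subset_closedBall).meromorphicOn.circleIntegrable_log_norm
    · intro z hz
      obtain h | h := eq_zero_or_norm_pos (f z)
      · simpa [h] using Real.log_nonneg hM
      · exact Real.log_le_log h (hbound z hz)
  have jensen := hf.circleAverage_log_norm hρ.ne' hfc
  rw [Real.log_div (by linarith) (norm_ne_zero_iff.2 hfc)]
  linarith

theorem summable_one_sub_norm_of_apply_eq_zero {f : ℂ → ℂ} {M : ℝ}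
    (hf : DifferentiableOn ℂ f (ball 0 1)) (hM : ∀ z ∈ ball 0 1, ‖f z‖ ≤ M) (hf0 : f 0 ≠ 0)
    {z : ℕ → ℂ} (hz : Function.Injective z) (hz1 : ∀ n, z n ∈ ball 0 1)
    (hfz : ∀ n, f (z n) = 0) : Summable fun n ↦ 1 - ‖z n‖ := by
  have hz0 : ∀ n, z n ≠ 0 := fun n h ↦ hf0 (h ▸ hfz n)
  have hlog (s : Finset ℕ) : ∑ n ∈ s, Real.log ‖z n‖⁻¹ ≤ Real.log (max M 1 / ‖f 0‖) := by
    have hnear : ∀ᶠ ρ in 𝓝[<] (1 : ℝ), 0 < ρ ∧ ∀ n ∈ s, ‖z n‖ ≤ ρ := by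
      refine (eventually_gt_nhds one_pos).filter_mono nhdsWithin_le_nhds |>.and ?_
      exact (s.eventually_all).2 fun n _ ↦
        ((eventually_gt_nhds (mem_ball_zero_iff.1 (hz1 n))).filter_mono nhdsWithin_le_nhds).mono
          fun _ h ↦ h.le
    have hjensen : ∀ᶠ ρ in 𝓝[<] (1 : ℝ),
        ∑ n ∈ s, Real.log (ρ * ‖z n‖⁻¹) ≤ Real.log (max M 1 / ‖f 0‖) := by
      filter_upwards [hnear, self_mem_nhdsWithin] with ρ ⟨hρ0, hzρ⟩ hρ1
      have hanalytic := (hf.analyticOnNhd isOpen_ball).mono (closedBall_subset_ball hρ1)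
      have hJ := hanalytic.sum_log_mul_norm_sub_inv_le hρ0 (le_max_right M 1) hf0
        (fun w hw ↦ (hM w (sphere_subset_closedBall.trans (closedBall_subset_ball hρ1) hw)).trans
          (le_max_left M 1))
        (t := s.image z) (by simpa [hfz] using fun n hn ↦ hzρ n hn)
      simpa [Finset.sum_image hz.injOn] using hJ
    have hcont : ContinuousAt (fun ρ : ℝ ↦ ∑ n ∈ s, Real.log (ρ * ‖z n‖⁻¹)) 1 := by
      fun_prop (disch := simp [hz0])
    simpa using le_of_tendsto (hcont.tendsto.mono_left nhdsWithin_le_nhds) hjensen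
  refine summable_of_sum_le (fun n ↦ sub_nonneg.2 (mem_ball_zero_iff.1 (hz1 n)).le)
    fun s ↦ (Finset.sum_le_sum fun n _ ↦ ?_).trans (hlog s)
  rw [Real.log_inv]
  linarith [Real.log_le_sub_one_of_pos (norm_pos_iff.2 (hz0 n))]

theorem Complex.re_one_add_div_one_sub_pos {ζ : ℂ} (hζ : ‖ζ‖ < 1) :
    0 < ((1 + ζ) / (1 - ζ)).re := by
  have hne : 1 - ζ ≠ 0 := sub_ne_zero.2 fun h ↦ by simp [← h] at hζ
  have hnum : (1 + ζ).re * (1 - ζ).re + (1 + ζ).im * (1 - ζ).im = 1 - ‖ζ‖ ^ 2 := by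
    rw [← normSq_eq_norm_sq, normSq_apply]
    simp only [add_re, sub_re, one_re, add_im, sub_im, one_im]
    ring
  rw [div_re, ← add_div, hnum]
  exact div_pos (by nlinarith [norm_nonneg ζ]) (normSq_pos.2 hne)

theorem one_add_div_one_sub_div {K : Type*} [Field K] [CharZero K] {u s : K} (hus : u + s ≠ 0) :
    (1 + (u - s) / (u + s)) / (1 - (u - s) / (u + s)) = u / s := by
  rw [one_add_div hus, one_sub_div hus, div_div_div_cancel_right₀ hus,
    show u + s + (u - s) = 2 * u by ring, show u + s - (u - s) = 2 * s by ring,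
    mul_div_mul_left _ _ two_ne_zero]

theorem one_sub_abs_sub_div_add {u s : ℝ} (hs : 0 < s) (hsu : s < u) :
    1 - |(u - s) / (u + s)| = 2 * s / (u + s) := by
  have hpos : 0 < u + s := by linarith
  rw [abs_of_nonneg (div_nonneg (by linarith) hpos.le), one_sub_div hpos.ne']
  ring_nf

theorem not_summable_div_mul_add {b c d : ℝ} (hb : 0 < b) (hc : 0 < c) (hd : d ≠ 0) :
    ¬Summable fun k : ℕ ↦ d / (b * k + c) := by
  intro h
  refine lt_irrefl 1 <| (Real.summable_one_div_nat_add_rpow (c / b) 1).1 <|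
    (h.mul_left (b / d)).congr fun k ↦ ?_
  rw [Real.rpow_one, abs_of_pos (by positivity)]
  field_simp

noncomputable def halfPlaneCayley (a s : ℝ) (ζ : ℂ) : ℂ :=
  I * (a + s * ((1 + ζ) / (1 - ζ)))

theorem mapsTo_halfPlaneCayley {a s : ℝ} (hs : 0 < s) :
    MapsTo (halfPlaneCayley a s) (ball 0 1) {w | a < w.im} := fun ζ hζ ↦ by
  have := re_one_add_div_one_sub_pos (mem_ball_zero_iff.1 hζ)
  simp only [mem_ofPred_eq, halfPlaneCayley, mul_im, I_re, I_im, zero_mul, one_mul, zero_add,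
    add_re, ofReal_re, re_ofReal_mul]
  nlinarith

theorem differentiableOn_halfPlaneCayley (a s : ℝ) :
    DifferentiableOn ℂ (halfPlaneCayley a s) (ball 0 1) := fun ζ hζ ↦ by
  have hne : 1 - ζ ≠ 0 := sub_ne_zero.2 fun h ↦ by simp [← h] at hζ
  unfold halfPlaneCayley
  fun_prop (disch := exact hne)

theorem halfPlaneCayley_zero (a s : ℝ) : halfPlaneCayley a s 0 = I * (a + s : ℝ) := by
  simp [halfPlaneCayley]

theorem halfPlaneCayley_ofReal {a s u : ℝ} (hs : s ≠ 0) (hus : u + s ≠ 0) :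
    halfPlaneCayley a s ((u - s) / (u + s) : ℝ) = I * (a + u : ℝ) := by
  have hus' : (u + s : ℂ) ≠ 0 := by exact_mod_cast hus
  rw [halfPlaneCayley]
  push_cast
  rw [one_add_div_one_sub_div hus', mul_div_cancel₀ _ (ofReal_ne_zero.2 hs)]

theorem apply_I_mul_eq_zero_of_bounded {f : ℂ → ℂ} {a b M t : ℝ} (hb : 0 < b)
    (hf : DifferentiableOn ℂ f {w | a < w.im}) (hM : ∀ w, a < w.im → ‖f w‖ ≤ M)
    (hzero : ∀ᶠ n : ℕ in atTop, f (I * (b * n)) = 0) (ht : a < t) : f (I * t) = 0 := by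
  by_contra hft
  set s := t - a
  have hs : 0 < s := sub_pos.2 ht
  obtain ⟨N, hN⟩ := (hzero.and (eventually_gt_atTop ⌈t / b⌉₊)).exists_forall_of_atTop
  set c := b * N - a
  have hsc : s < c := by
    have := Nat.lt_of_ceil_lt (hN N le_rfl).2
    rw [div_lt_iff₀ hb] at this
    linarith
  have hsu (k : ℕ) : s < b * k + c := by nlinarith [k.cast_nonneg (α := ℝ)]
  -- The zeros `I * (b * (N + k))` pulled back to the disc.
  set z : ℕ → ℂ := fun k ↦ ((b * k + c - s) / (b * k + c + s) : ℝ)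
  have hz_norm (k : ℕ) : 1 - ‖z k‖ = 2 * s / (b * k + (c + s)) := by
    rw [norm_real, Real.norm_eq_abs, one_sub_abs_sub_div_add hs (hsu k), add_assoc]
  have hz_ball (k : ℕ) : z k ∈ ball 0 1 := by
    have : 0 < 2 * s / (b * k + (c + s)) := div_pos (by positivity) (by linarith [hsu k])
    rw [mem_ball_zero_iff]
    linarith [hz_norm k]
  have hz_inj : z.Injective := fun k₁ k₂ h ↦ by
    have h12 := (hz_norm k₁).symm.trans (h ▸ hz_norm k₂)
    rw [div_eq_div_iff_comm, div_left_inj' (by positivity), add_left_inj,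
      mul_right_inj' hb.ne'] at h12
    exact_mod_cast h12
  have hfz (k : ℕ) : (f ∘ halfPlaneCayley a s) (z k) = 0 := by
    rw [Function.comp_apply, halfPlaneCayley_ofReal hs.ne' (by linarith [hsu k])]
    convert (hN (N + k) (Nat.le_add_right N k)).1 using 2
    simp only [c]
    push_cast
    ring
  refine not_summable_div_mul_add hb (c := c + s) (by linarith) (by positivity : 2 * s ≠ 0) ?_
  refine (summable_one_sub_norm_of_apply_eq_zero
    (hf.comp (differentiableOn_halfPlaneCayley a s) (mapsTo_halfPlaneCayley hs))
    (fun ζ hζ ↦ hM _ (mapsTo_halfPlaneCayley hs hζ)) ?_ hz_inj hz_ball hfz).congr hz_norm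
  simpa [halfPlaneCayley_zero, s] using hft

theorem isConnected_setOf_im_pos_diff {s : Set ℂ} (hs : s.Countable) :
    IsConnected ({z : ℂ | 0 < z.im} \ s) := by
  set φ : ℂ → ℂ := fun w ↦ w.re + I * Real.exp w.im
  have hφ_inj : φ.Injective := fun w₁ w₂ h ↦ by
    have hre := congrArg re h
    have him := congrArg im h
    simp [φ, -ofReal_exp] at hre him
    exact Complex.ext hre him
  have himage : {z : ℂ | 0 < z.im} \ s = φ '' (φ ⁻¹' s)ᶜ := by
    ext z
    refine ⟨fun ⟨hz, hzs⟩ ↦ ?_, ?_⟩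
    · have hφz : φ (z.re + I * Real.log z.im) = z := by
        simp [φ, -ofReal_exp, Real.exp_log hz, mul_comm I, re_add_im]
      exact ⟨_, by rwa [mem_compl_iff, mem_preimage, hφz], hφz⟩
    · rintro ⟨w, hw, rfl⟩
      exact ⟨by simp [φ, -ofReal_exp, Real.exp_pos], hw⟩
  rw [himage]
  refine IsConnected.image ?_ φ (by fun_prop)
  exact (hs.preimage hφ_inj).isConnected_compl_of_one_lt_rank (by simp [rank_real_complex])

theorem eqOn_zero_setOf_im_pos_diff_of_bounded {f : ℂ → ℂ} {P : Set ℂ} {R M b : ℝ}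
    (hP : P.Finite) (hb : 0 < b) (hf : DifferentiableOn ℂ f ({z | 0 < z.im} \ P))
    (hM : ∀ z, 0 < z.im → R < ‖z‖ → ‖f z‖ ≤ M)
    (hzero : ∀ᶠ n : ℕ in atTop, f (I * (b * n)) = 0) :
    EqOn f 0 ({z | 0 < z.im} \ P) := by
  obtain ⟨C, hC⟩ := hP.isBounded.subset_closedBall 0
  set a := max (max R C) 0
  have hfar : ∀ w : ℂ, a < w.im → 0 < w.im ∧ R < ‖w‖ ∧ w ∉ P := fun w hw ↦ by
    have him : w.im ≤ ‖w‖ := (le_abs_self _).trans (abs_im_le_norm w)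
    have : R ≤ a ∧ C ≤ a ∧ 0 ≤ a := by simp [a]
    refine ⟨by linarith, by linarith, fun hwP ↦ ?_⟩
    have := mem_closedBall_zero_iff.1 (hC hwP)
    linarith
  have hray : ∀ t, a < t → f (I * t) = 0 := fun t ht ↦
    apply_I_mul_eq_zero_of_bounded hb
      (hf.mono fun w hw ↦ ⟨(hfar w hw).1, (hfar w hw).2.2⟩)
      (fun w hw ↦ hM w (hfar w hw).1 (hfar w hw).2.1) hzero ht
  have hopen : IsOpen ({z : ℂ | 0 < z.im} \ P) :=
    (isOpen_lt continuous_const continuous_im).sdiff hP.isClosed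
  have hz₀ : I * (a + 1 : ℝ) ∈ {z : ℂ | 0 < z.im} \ P := by
    have := hfar (I * (a + 1 : ℝ)) (by simp)
    exact ⟨this.1, this.2.2⟩
  refine (hf.analyticOnNhd hopen).eqOn_zero_of_preconnected_of_frequently_eq_zero
    (isConnected_setOf_im_pos_diff hP.countable).isPreconnected hz₀ ?_
  have hlim : Tendsto (fun t : ℝ ↦ I * t) (𝓝[>] (a + 1)) (𝓝[≠] (I * (a + 1 : ℝ))) := by
    refine tendsto_nhdsWithin_of_tendsto_nhds_of_eventually_within _
      ((Continuous.tendsto (by fun_prop) _).mono_left nhdsWithin_le_nhds) ?_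
    filter_upwards [self_mem_nhdsWithin] with t (ht : a + 1 < t)
    simpa [I_ne_zero, ← ofReal_one, ← ofReal_add] using ht.ne'
  refine hlim.frequently (Eventually.frequently ?_)
  filter_upwards [self_mem_nhdsWithin] with t ht
  exact hray t (by linarith [mem_Ioi.1 ht])

theorem eqOn_zero_setOf_im_ne_zero_diff_of_bounded {f : ℂ → ℂ} {P : Set ℂ} {R M b : ℝ}
    (hP : P.Finite) (hb : 0 < b) (hf : DifferentiableOn ℂ f ({z | z.im ≠ 0} \ P))
    (hM : ∀ z, z.im ≠ 0 → R < ‖z‖ → ‖f z‖ ≤ M)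
    (hzero : ∀ n : ℤ, n ≠ 0 → f (I * (b * n)) = 0) :
    EqOn f 0 ({z | z.im ≠ 0} \ P) := by
  have hupper : EqOn f 0 ({z | 0 < z.im} \ P) :=
    eqOn_zero_setOf_im_pos_diff_of_bounded hP hb
      (hf.mono (sdiff_subset_sdiff_left fun z hz ↦ ne_of_gt hz))
      (fun z hz ↦ hM z hz.ne') ((eventually_ge_atTop 1).mono fun n hn ↦ by
        simpa using hzero n (by exact_mod_cast (Nat.one_le_iff_ne_zero.1 hn)))
  have hlower : EqOn (fun w ↦ f (-w)) 0 ({z | 0 < z.im} \ (-P)) := by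
    refine eqOn_zero_setOf_im_pos_diff_of_bounded hP.neg hb ?_ (R := R) (M := M)
      (fun z hz ↦ by simpa using hM (-z) (by simpa using hz.ne')) ?_
    · refine hf.comp (differentiableOn_neg _) fun z hz ↦ ⟨?_, ?_⟩
      · simpa using hz.1.ne'
      · simpa [Set.mem_neg] using hz.2
    · refine (eventually_ge_atTop 1).mono fun n hn ↦ ?_
      simpa using hzero (-n) (by simpa using (Nat.one_le_iff_ne_zero.1 hn))
  rintro z ⟨hz, hzP⟩
  rcases lt_or_gt_of_ne hz with hneg | hpos
  · simpa using hlower (x := -z) ⟨by simpa using hneg, by simpa [Set.mem_neg] using hzP⟩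
  · exact hupper ⟨hpos, hzP⟩

theorem mem_of_tendsto_norm_atTop_of_eq {D₁ D₂ : ℂ → ℂ} {S₁ S₂ : Set ℂ} (hS₁ : S₁.Finite)
    (hS₂ : S₂.Finite) (hol₂ : DifferentiableOn ℂ D₂ ({z | z.im ≠ 0} \ S₂))
    (heq : ∀ z : ℂ, z.im ≠ 0 → z ∉ S₁ → z ∉ S₂ → D₁ z = D₂ z) {s : ℂ} (hs : s.im ≠ 0)
    (hpole : Tendsto (fun z ↦ ‖D₁ z‖) (𝓝[{z | z.im ≠ 0} \ S₁] s) atTop) : s ∈ S₂ := by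
  by_contra hs₂
  set U := {z : ℂ | z.im ≠ 0} \ (S₁ ∪ S₂)
  have hoff : {z : ℂ | z.im ≠ 0} ∈ 𝓝 s := (isOpen_ne_fun continuous_im continuous_const).mem_nhds hs
  have : (𝓝[U] s).NeBot := neBot_of_le <| nhdsWithin_le_of_mem <|
    nhdsNE_of_nhdsNE_sdiff_finite (mem_nhdsWithin_of_mem_nhds hoff) (hS₁.union hS₂)
  have hD₂ : ContinuousAt D₂ s :=
    (hol₂.differentiableAt (sdiff_mem hoff (hS₂.isClosed.compl_mem_nhds hs₂))).continuousAt
  have hD₁ : Tendsto (fun z ↦ ‖D₁ z‖) (𝓝[U] s) atTop :=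
    hpole.mono_left (nhdsWithin_mono _ (sdiff_subset_sdiff_right subset_union_left))
  have hagree : (fun z ↦ ‖D₁ z‖) =ᶠ[𝓝[U] s] fun z ↦ ‖D₂ z‖ := by
    filter_upwards [self_mem_nhdsWithin] with z ⟨hz, hzS⟩
    rw [heq z hz (fun h ↦ hzS (Or.inl h)) (fun h ↦ hzS (Or.inr h))]
  exact not_tendsto_atTop_of_tendsto_nhds (hD₂.norm.tendsto.mono_left nhdsWithin_le_nhds)
    (hD₁.congr' hagree)

theorem matsubara_uniqueness (β : ℝ) (hβ : 0 < β) (D₁ D₂ : ℂ → ℂ) (S₁ S₂ : Finset ℂ)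
    (hS₁ : ∀ s ∈ S₁, s.im ≠ 0) (hS₂ : ∀ s ∈ S₂, s.im ≠ 0)
    (hol₁ : DifferentiableOn ℂ D₁ ({z : ℂ | z.im ≠ 0} \ (S₁ : Set ℂ)))
    (hol₂ : DifferentiableOn ℂ D₂ ({z : ℂ | z.im ≠ 0} \ (S₂ : Set ℂ)))
    (hpole₁ : ∀ s ∈ S₁,
      Tendsto (fun z => ‖D₁ z‖) (𝓝[{z : ℂ | z.im ≠ 0} \ (S₁ : Set ℂ)] s) atTop)
    (hpole₂ : ∀ s ∈ S₂,
      Tendsto (fun z => ‖D₂ z‖) (𝓝[{z : ℂ | z.im ≠ 0} \ (S₂ : Set ℂ)] s) atTop)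
    (hdecay₁ : ∀ ε > 0, ∃ R : ℝ, ∀ z : ℂ, z.im ≠ 0 → R < ‖z‖ → ‖D₁ z‖ < ε)
    (hdecay₂ : ∀ ε > 0, ∃ R : ℝ, ∀ z : ℂ, z.im ≠ 0 → R < ‖z‖ → ‖D₂ z‖ < ε)
    (heq : ∀ n : ℤ, n ≠ 0 →
      D₁ (Complex.I * (2 * Real.pi * n / β)) = D₂ (Complex.I * (2 * Real.pi * n / β))) :
    (∀ z : ℂ, z.im ≠ 0 → z ∉ S₁ → z ∉ S₂ → D₁ z = D₂ z) ∧ S₁ = S₂ := by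
  obtain ⟨R₁, hR₁⟩ := hdecay₁ 1 one_pos
  obtain ⟨R₂, hR₂⟩ := hdecay₂ 1 one_pos
  have hdiff : EqOn (D₁ - D₂) 0 ({z | z.im ≠ 0} \ (↑S₁ ∪ ↑S₂)) := by
    refine eqOn_zero_setOf_im_ne_zero_diff_of_bounded (S₁.finite_toSet.union S₂.finite_toSet)
      (b := 2 * Real.pi / β) (by positivity) ?_ (R := max R₁ R₂) (M := 2) ?_ fun n hn ↦ ?_
    · exact (hol₁.mono (sdiff_subset_sdiff_right subset_union_left)).sub
        (hol₂.mono (sdiff_subset_sdiff_right subset_union_right))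
    · intro z hz hzR
      have h₁ := hR₁ z hz (lt_of_le_of_lt (le_max_left _ _) hzR)
      have h₂ := hR₂ z hz (lt_of_le_of_lt (le_max_right _ _) hzR)
      exact (norm_sub_le _ _).trans (by linarith)
    · simpa [sub_eq_zero, mul_div_right_comm] using heq n hn
  have hagree : ∀ z : ℂ, z.im ≠ 0 → z ∉ S₁ → z ∉ S₂ → D₁ z = D₂ z := fun z hz h₁ h₂ ↦
    sub_eq_zero.1 (hdiff ⟨hz, by simp [h₁, h₂]⟩)
  refine ⟨hagree, Finset.Subset.antisymm (fun s hs ↦ ?_) (fun s hs ↦ ?_)⟩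
  · exact mem_of_tendsto_norm_atTop_of_eq S₁.finite_toSet S₂.finite_toSet hol₂ hagree (hS₁ s hs)
      (hpole₁ s hs)
  · exact mem_of_tendsto_norm_atTop_of_eq S₂.finite_toSet S₁.finite_toSet hol₁
      (fun z hz h₂ h₁ ↦ (hagree z hz h₁ h₂).symm) (hS₂ s hs) (hpole₂ s hs)
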